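/- Any two distinct copyable elements of a commutative †-Frobenius monoid (H, m, u) are orthogonal: if ψ and χ are copyable and ψ ≠ χ, then ⟨ψ, χ⟩ = 0. Consequently the copyable elements form an orthogonal basis of H. -/

import Mathlib

/-!
Write `a x` for `m (a ⊗ x)` and `1` for `u 1`. For copyable `ψ`, the Frobenius law applied to
`a ⊗ ψ` gives `δ (a ψ) = a ψ ⊗ ψ`, and pairing with the unit shows `a ψ ∈ ℂ ψ`. If `ψ ≠ χ` are
copyable, commutativity makes `δ (ψ χ)` equal to both `ψ χ ⊗ χ` and `ψ χ ⊗ ψ`, so `ψ χ = 0` and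
`⟪χ, ψ⟫ ⟪χ, χ⟫ = ⟪δ χ, ψ ⊗ χ⟫ = ⟪χ, ψ χ⟫ = 0`.

For spanning, the span `W` of the copyable elements is invariant under every multiplication
operator `L a`, so `Wᗮ` is invariant under the commuting family `(L a)†`. A common eigenvector
`v ∈ Wᗮ` satisfies `⟪v, a x⟫ = conj (c a) ⟪v, x⟫`, hence `⟪v, a x⟫ ⟪v, 1⟫ = ⟪v, a⟫ ⟪v, x⟫`,
and a rescaling of `v` is copyable; so `Wᗮ = 0`.
-/

noncomputable section

open scoped TensorProduct ComplexConjugate InnerProductSpace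

open scoped TensorProduct ComplexConjugate InnerProductSpace

variable {H : Type*} [NormedAddCommGroup H] [InnerProductSpace ℂ H] [FiniteDimensional ℂ H]

namespace TensorIP

variable (H) in
/-- A basis of `H ⊗ H` built from an orthonormal basis of `H`. -/
def tb : Module.Basis (Fin (Module.finrank ℂ H) × Fin (Module.finrank ℂ H)) ℂ (H ⊗[ℂ] H) :=
  Module.Basis.tensorProduct (stdOrthonormalBasis ℂ H).toBasis (stdOrthonormalBasis ℂ H).toBasis

variable (H) in
/-- The canonical inner product space structure on `H ⊗ H`, which is determined by
`⟪a ⊗ b, c ⊗ d⟫ = ⟪a,c⟫ * ⟪b,d⟫` (see `TensorIP.inner_tmul` below). -/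
def core : InnerProductSpace.Core ℂ (H ⊗[ℂ] H) where
  inner x y := ∑ p, conj ((tb H).repr x p) * ((tb H).repr y p)
  conj_inner_symm x y := by
    simp only [map_sum, map_mul, starRingEnd_self_apply]
    exact Finset.sum_congr rfl fun p _ => by ring
  re_inner_nonneg x := by
    show 0 ≤ RCLike.re (∑ p, conj ((tb H).repr x p) * ((tb H).repr x p))
    have h : ∀ p : Fin (Module.finrank ℂ H) × Fin (Module.finrank ℂ H),
        conj ((tb H).repr x p) * ((tb H).repr x p)
          = ((Complex.normSq ((tb H).repr x p) : ℝ) : ℂ) := fun p => by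
      rw [mul_comm, Complex.mul_conj]
    simp only [h]
    rw [map_sum]
    refine Finset.sum_nonneg fun p _ => ?_
    simp [Complex.normSq_nonneg]
  add_left x y z := by
    simp only [map_add, Finsupp.add_apply]
    rw [← Finset.sum_add_distrib]
    exact Finset.sum_congr rfl fun p _ => by ring
  smul_left x y r := by
    simp only [map_smul, Finsupp.smul_apply, smul_eq_mul, map_mul, Finset.mul_sum]
    exact Finset.sum_congr rfl fun p _ => by ring
  definite x hx := by
    have hx' : ∑ p, conj ((tb H).repr x p) * ((tb H).repr x p) = 0 := hx
    have h2 : ∑ p, ((Complex.normSq ((tb H).repr x p) : ℝ) : ℂ) = 0 := by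
      rw [← hx']
      exact Finset.sum_congr rfl fun p _ => by rw [mul_comm, Complex.mul_conj]
    have h3 : ∑ p, Complex.normSq ((tb H).repr x p) = 0 := by exact_mod_cast h2
    have h4 : ∀ p ∈ Finset.univ, Complex.normSq ((tb H).repr x p) = 0 :=
      (Finset.sum_eq_zero_iff_of_nonneg fun p _ => Complex.normSq_nonneg _).mp h3
    have h5 : (tb H).repr x = 0 := by
      ext p
      exact Complex.normSq_eq_zero.mp (h4 p (Finset.mem_univ p))
    simpa using (tb H).repr.map_eq_zero_iff.mp h5

instance : NormedAddCommGroup (H ⊗[ℂ] H) :=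
  @InnerProductSpace.Core.toNormedAddCommGroup ℂ (H ⊗[ℂ] H) _ _ _ (core H)

instance : InnerProductSpace ℂ (H ⊗[ℂ] H) := InnerProductSpace.ofCore (core H).toCore

attribute [-instance] TensorProduct.instInner

theorem inner_tmul (a b c d : H) :
    ⟪a ⊗ₜ[ℂ] b, c ⊗ₜ[ℂ] d⟫_ℂ = ⟪a, c⟫_ℂ * ⟪b, d⟫_ℂ := by
  have key : ∀ (x y : H) (p : Fin (Module.finrank ℂ H) × Fin (Module.finrank ℂ H)),
      (tb H).repr (x ⊗ₜ[ℂ] y) p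
        = ⟪(stdOrthonormalBasis ℂ H) p.1, x⟫_ℂ * ⟪(stdOrthonormalBasis ℂ H) p.2, y⟫_ℂ := by
    rintro x y ⟨i, j⟩
    rw [tb, Module.Basis.tensorProduct_repr_tmul_apply, smul_eq_mul,
      OrthonormalBasis.coe_toBasis_repr_apply, OrthonormalBasis.coe_toBasis_repr_apply,
      OrthonormalBasis.repr_apply_apply, OrthonormalBasis.repr_apply_apply, mul_comm]
  show (∑ p, conj ((tb H).repr (a ⊗ₜ[ℂ] b) p) * ((tb H).repr (c ⊗ₜ[ℂ] d) p)) = _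
  simp only [key, map_mul]
  rw [← Finset.univ_product_univ, Finset.sum_product]
  have h : ∀ i j : Fin (Module.finrank ℂ H),
      (conj ⟪(stdOrthonormalBasis ℂ H) i, a⟫_ℂ * conj ⟪(stdOrthonormalBasis ℂ H) j, b⟫_ℂ) *
        (⟪(stdOrthonormalBasis ℂ H) i, c⟫_ℂ * ⟪(stdOrthonormalBasis ℂ H) j, d⟫_ℂ)
      = (⟪a, (stdOrthonormalBasis ℂ H) i⟫_ℂ * ⟪(stdOrthonormalBasis ℂ H) i, c⟫_ℂ) *
        (⟪b, (stdOrthonormalBasis ℂ H) j⟫_ℂ * ⟪(stdOrthonormalBasis ℂ H) j, d⟫_ℂ) := by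
    intro i j
    rw [inner_conj_symm, inner_conj_symm]; ring
  simp only [h]
  rw [← Finset.sum_mul_sum]
  rw [OrthonormalBasis.sum_inner_mul_inner, OrthonormalBasis.sum_inner_mul_inner]

end TensorIP

/-- `(H, m, u)` is a commutative †-Frobenius monoid: `m` is associative and commutative,
`u 1` is a two-sided unit for `m`, and the Frobenius law
`(m ⊗ id) ∘ (id ⊗ δ) = δ ∘ m` holds, where `δ := m†`. -/
def IsFrobenius (m : H ⊗[ℂ] H →ₗ[ℂ] H) (u : ℂ →ₗ[ℂ] H) : Prop :=
  (m ∘ₗ TensorProduct.map m LinearMap.id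
      = m ∘ₗ TensorProduct.map LinearMap.id m ∘ₗ (TensorProduct.assoc ℂ H H H).toLinearMap)
    ∧ (m ∘ₗ (TensorProduct.comm ℂ H H).toLinearMap = m)
    ∧ (∀ x : H, m (u 1 ⊗ₜ[ℂ] x) = x)
    ∧ (∀ x : H, m (x ⊗ₜ[ℂ] u 1) = x)
    ∧ (TensorProduct.map m LinearMap.id ∘ₗ (TensorProduct.assoc ℂ H H H).symm.toLinearMap
        ∘ₗ TensorProduct.map LinearMap.id (LinearMap.adjoint m)
      = LinearMap.adjoint m ∘ₗ m)

/-- `ψ` is a copyable element: `δ ψ = ψ ⊗ ψ` and `ε ψ = 1`, where `δ := m†`, `ε := u†`. -/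
def Copyable (m : H ⊗[ℂ] H →ₗ[ℂ] H) (u : ℂ →ₗ[ℂ] H) (ψ : H) : Prop :=
  LinearMap.adjoint m ψ = ψ ⊗ₜ[ℂ] ψ ∧ LinearMap.adjoint u ψ = 1

-- Mathlib's own inner product on tensor products would otherwise be found for `⟪_, _⟫` on
-- `H ⊗ H` instead of the `TensorIP` one.
attribute [-instance] TensorProduct.instInner

theorem Module.End.exists_common_eigenvector {K V ι : Type*} [Field K] [IsAlgClosed K]
    [AddCommGroup V] [Module K V] [FiniteDimensional K V] (f : ι → Module.End K V)
    (hf : ∀ i j, Commute (f i) (f j)) (U : Submodule K V) (hU : U ≠ ⊥)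
    (hUf : ∀ i, U ∈ Module.End.invtSubmodule (f i)) :
    ∃ v ∈ U, v ≠ 0 ∧ ∀ i, ∃ c : K, f i v = c • v := by
  induction hn : Module.finrank K U using Nat.strong_induction_on generalizing U with
  | _ n ih =>
  by_cases hscalar : ∀ i, ∃ c : K, ∀ x ∈ U, f i x = c • x
  · obtain ⟨v, hvU, hv0⟩ := (Submodule.ne_bot_iff U).mp hU
    exact ⟨v, hvU, hv0, fun i => (hscalar i).imp fun c hc => hc v hvU⟩
  push Not at hscalar
  obtain ⟨i, hi⟩ := hscalar
  have : Nontrivial U := Submodule.nontrivial_iff_ne_bot.mpr hU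
  obtain ⟨μ, hμ⟩ := Module.End.exists_eigenvalue
    ((f i).restrict ((Module.End.mem_invtSubmodule_iff_forall_mem_of_mem _).mp (hUf i)))
  obtain ⟨y, hy⟩ := hμ.exists_hasEigenvector
  -- An eigenspace of the non-scalar `f i` inside `U` is smaller, nonzero, and still invariant.
  set U' := U ⊓ Module.End.eigenspace (f i) μ
  have hU'ne : U' ≠ ⊥ := by
    refine (Submodule.ne_bot_iff U').mpr ⟨y, ⟨y.2, ?_⟩, by simpa using hy.2⟩
    have := congrArg Subtype.val (Module.End.mem_eigenspace_iff.mp hy.1)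
    exact Module.End.mem_eigenspace_iff.mpr this
  have hU'lt : U' < U := by
    refine lt_of_le_of_ne inf_le_left fun h => ?_
    obtain ⟨x, hxU, hx⟩ := hi μ
    exact hx (Module.End.mem_eigenspace_iff.mp (h ▸ hxU : x ∈ U').2)
  have hU'f : ∀ j, U' ∈ Module.End.invtSubmodule (f j) := by
    intro j
    refine (Module.End.mem_invtSubmodule_iff_forall_mem_of_mem _).mpr
      fun x ⟨hxU, hxμ⟩ => ⟨?_, ?_⟩
    · exact (Module.End.mem_invtSubmodule_iff_forall_mem_of_mem _).mp (hUf j) x hxU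
    · rw [SetLike.mem_coe, Module.End.mem_eigenspace_iff] at hxμ ⊢
      rw [← Module.End.mul_apply, (hf i j).eq, Module.End.mul_apply, hxμ, map_smul]
  obtain ⟨v, hvU', hv0, hv⟩ :=
    ih _ (hn ▸ Submodule.finrank_lt_finrank_of_lt hU'lt) U' hU'ne hU'f rfl
  exact ⟨v, hvU'.1, hv0, hv⟩

theorem TensorIP.ext_inner_tmul {x y : H ⊗[ℂ] H}
    (h : ∀ a b : H, ⟪x, a ⊗ₜ[ℂ] b⟫_ℂ = ⟪y, a ⊗ₜ[ℂ] b⟫_ℂ) : x = y := by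
  refine ext_inner_right ℂ fun t => ?_
  induction t using TensorProduct.induction_on with
  | zero => simp
  | tmul a b => exact h a b
  | add s t hs ht => simp only [inner_add_right, hs, ht]

theorem copyable_iff_inner {m : H ⊗[ℂ] H →ₗ[ℂ] H} {u : ℂ →ₗ[ℂ] H} {χ : H} :
    Copyable m u χ ↔
      (∀ a x : H, ⟪χ, m (a ⊗ₜ[ℂ] x)⟫_ℂ = ⟪χ, a⟫_ℂ * ⟪χ, x⟫_ℂ) ∧ ⟪χ, u 1⟫_ℂ = 1 := by
  have hcounit : LinearMap.adjoint u χ = 1 ↔ ⟪χ, u 1⟫_ℂ = 1 := by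
    rw [← LinearMap.adjoint_inner_left, RCLike.inner_apply, one_mul,
      map_eq_one_iff _ (RingHom.injective _)]
  refine and_congr ⟨fun hδ a x => ?_, fun hδ => TensorIP.ext_inner_tmul fun a x => ?_⟩ hcounit
  · rw [← LinearMap.adjoint_inner_left, hδ, TensorIP.inner_tmul]
  · rw [LinearMap.adjoint_inner_left, hδ, TensorIP.inner_tmul]

theorem Copyable.ne_zero {m : H ⊗[ℂ] H →ₗ[ℂ] H} {u : ℂ →ₗ[ℂ] H} {ψ : H}
    (hψ : Copyable m u ψ) : ψ ≠ 0 := by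
  rintro rfl
  simpa using hψ.2

def leftMul (m : H ⊗[ℂ] H →ₗ[ℂ] H) (a : H) : Module.End ℂ H :=
  m ∘ₗ TensorProduct.mk ℂ H H a

namespace IsFrobenius

variable {m : H ⊗[ℂ] H →ₗ[ℂ] H} {u : ℂ →ₗ[ℂ] H} (hfrob : IsFrobenius m u)
include hfrob

theorem mul_tmul_comm (a b : H) : m (a ⊗ₜ[ℂ] b) = m (b ⊗ₜ[ℂ] a) := by
  obtain ⟨-, hcomm, -, -, -⟩ := hfrob
  simpa using LinearMap.congr_fun hcomm (b ⊗ₜ[ℂ] a)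

theorem mul_tmul_assoc (a b c : H) :
    m (m (a ⊗ₜ[ℂ] b) ⊗ₜ[ℂ] c) = m (a ⊗ₜ[ℂ] m (b ⊗ₜ[ℂ] c)) := by
  obtain ⟨hassoc, -, -, -, -⟩ := hfrob
  simpa using LinearMap.congr_fun hassoc ((a ⊗ₜ[ℂ] b) ⊗ₜ[ℂ] c)

theorem commute_leftMul (a b : H) : Commute (leftMul m a) (leftMul m b) := by
  ext x
  simp only [leftMul, Module.End.mul_apply, LinearMap.comp_apply, TensorProduct.mk_apply]
  rw [← hfrob.mul_tmul_assoc, ← hfrob.mul_tmul_assoc, hfrob.mul_tmul_comm a b]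

theorem adjoint_mul_tmul_of_adjoint_eq_tmul {ψ : H} (hψ : LinearMap.adjoint m ψ = ψ ⊗ₜ[ℂ] ψ)
    (a : H) : LinearMap.adjoint m (m (a ⊗ₜ[ℂ] ψ)) = m (a ⊗ₜ[ℂ] ψ) ⊗ₜ[ℂ] ψ := by
  obtain ⟨-, -, -, -, hfrobenius⟩ := hfrob
  simpa [hψ] using (LinearMap.congr_fun hfrobenius (a ⊗ₜ[ℂ] ψ)).symm

theorem eq_inner_smul_of_adjoint_eq_tmul {y ψ : H} (hy : LinearMap.adjoint m y = y ⊗ₜ[ℂ] ψ) :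
    y = ⟪u 1, y⟫_ℂ • ψ := by
  obtain ⟨-, -, hunit, -, -⟩ := hfrob
  refine ext_inner_right ℂ fun z => ?_
  calc ⟪y, z⟫_ℂ = ⟪y, m (u 1 ⊗ₜ[ℂ] z)⟫_ℂ := by rw [hunit]
    _ = ⟪y, u 1⟫_ℂ * ⟪ψ, z⟫_ℂ := by
      rw [← LinearMap.adjoint_inner_left, hy, TensorIP.inner_tmul]
    _ = ⟪⟪u 1, y⟫_ℂ • ψ, z⟫_ℂ := by rw [inner_smul_left, inner_conj_symm]

theorem leftMul_mem_span_singleton {ψ : H} (hψ : Copyable m u ψ) (a : H) :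
    leftMul m a ψ ∈ ℂ ∙ ψ :=
  Submodule.mem_span_singleton.mpr
    ⟨_, (hfrob.eq_inner_smul_of_adjoint_eq_tmul
      (hfrob.adjoint_mul_tmul_of_adjoint_eq_tmul hψ.1 a)).symm⟩

theorem inner_eq_zero_of_copyable {ψ χ : H} (hψ : Copyable m u ψ) (hχ : Copyable m u χ)
    (hne : ψ ≠ χ) : ⟪ψ, χ⟫_ℂ = 0 := by
  have hmul : m (ψ ⊗ₜ[ℂ] χ) = 0 := by
    have h : m (ψ ⊗ₜ[ℂ] χ) ⊗ₜ[ℂ] (χ - ψ) = 0 := by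
      rw [TensorProduct.tmul_sub, ← hfrob.adjoint_mul_tmul_of_adjoint_eq_tmul hχ.1,
        hfrob.mul_tmul_comm, ← hfrob.adjoint_mul_tmul_of_adjoint_eq_tmul hψ.1, sub_self]
    have h' := congrArg (fun t => ⟪t, t⟫_ℂ) h
    simp only [TensorIP.inner_tmul, inner_zero_left, mul_eq_zero, inner_self_eq_zero,
      sub_eq_zero] at h'
    exact h'.resolve_right (Ne.symm hne)
  have h : ⟪χ, ψ⟫_ℂ * ⟪χ, χ⟫_ℂ = 0 := by
    rw [← (copyable_iff_inner.mp hχ).1, hmul, inner_zero_right]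
  rw [← inner_conj_symm, (mul_eq_zero.mp h).resolve_right (inner_self_ne_zero.mpr hχ.ne_zero),
    map_zero]

theorem exists_copyable_smul_of_common_eigenvector {v : H} (hv : v ≠ 0)
    (heig : ∀ a, ∃ c : ℂ, LinearMap.adjoint (leftMul m a) v = c • v) :
    ∃ c : ℂ, Copyable m u (c • v) := by
  obtain ⟨-, -, -, hunit, -⟩ := hfrob
  have hmul : ∀ a x, ⟪v, m (a ⊗ₜ[ℂ] x)⟫_ℂ * ⟪v, u 1⟫_ℂ = ⟪v, a⟫_ℂ * ⟪v, x⟫_ℂ := by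
    intro a x
    obtain ⟨c, hc⟩ := heig a
    have hleft : ∀ y, ⟪v, m (a ⊗ₜ[ℂ] y)⟫_ℂ = conj c * ⟪v, y⟫_ℂ := fun y => by
      rw [← inner_smul_left, ← hc, LinearMap.adjoint_inner_left]
      rfl
    have hleft_unit := hleft (u 1)
    rw [hunit] at hleft_unit
    rw [hleft, hleft_unit]
    ring
  have hd : ⟪v, u 1⟫_ℂ ≠ 0 := by
    intro h0
    have hvv := hmul v v
    rw [h0, mul_zero, eq_comm, mul_self_eq_zero, inner_self_eq_zero] at hvv
    exact hv hvv
  refine ⟨(conj ⟪v, u 1⟫_ℂ)⁻¹, copyable_iff_inner.mpr ⟨fun a x => ?_, ?_⟩⟩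
  · simp only [inner_smul_left, map_inv₀, Complex.conj_conj]
    field_simp
    linear_combination hmul a x
  · rw [inner_smul_left, map_inv₀, Complex.conj_conj, inv_mul_cancel₀ hd]

theorem span_copyable_eq_top : Submodule.span ℂ {ψ : H | Copyable m u ψ} = ⊤ := by
  set W := Submodule.span ℂ {ψ : H | Copyable m u ψ}
  have hW : ∀ a, W ∈ Module.End.invtSubmodule (leftMul m a) := fun a =>
    Submodule.span_le.mpr fun ψ hψ =>
      Submodule.span_mono (Set.singleton_subset_iff.mpr hψ)
        (hfrob.leftMul_mem_span_singleton hψ a)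
  have hWperp : ∀ a, Wᗮ ∈ Module.End.invtSubmodule (LinearMap.adjoint (leftMul m a)) :=
    fun a => Module.End.mem_invtSubmodule_adjoint_iff.mp <| by
      rw [LinearMap.adjoint_adjoint]
      exact hW a
  have hcomm : ∀ a b,
      Commute (LinearMap.adjoint (leftMul m a)) (LinearMap.adjoint (leftMul m b)) := fun a b => by
    simpa only [LinearMap.star_eq_adjoint] using (hfrob.commute_leftMul a b).star_star
  rw [← Submodule.orthogonal_eq_bot_iff]
  by_contra hWperp_ne
  obtain ⟨v, hvW, hv0, heig⟩ := Module.End.exists_common_eigenvector _ hcomm Wᗮ hWperp_ne hWperp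
  obtain ⟨c, hc⟩ := hfrob.exists_copyable_smul_of_common_eigenvector hv0 heig
  have hcv : c • v ∈ W ⊓ Wᗮ := ⟨Submodule.subset_span hc, Wᗮ.smul_mem c hvW⟩
  rw [W.inf_orthogonal_eq_bot, Submodule.mem_bot] at hcv
  exact hc.ne_zero hcv

end IsFrobenius

/--Distinct copyable elements are orthogonal; consequently the copyable elements form an
orthogonal basis of `H`: pairwise orthogonal, nonzero, and spanning. -/
theorem copyable_orthogonal_basis (m : H ⊗[ℂ] H →ₗ[ℂ] H) (u : ℂ →ₗ[ℂ] H)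
    (hfrob : IsFrobenius m u) :
    (∀ ψ χ : H, Copyable m u ψ → Copyable m u χ → ψ ≠ χ → ⟪ψ, χ⟫_ℂ = 0)
      ∧ (0 : H) ∉ {ψ : H | Copyable m u ψ}
      ∧ Submodule.span ℂ {ψ : H | Copyable m u ψ} = ⊤ :=
  ⟨fun _ _ hψ hχ hne => hfrob.inner_eq_zero_of_copyable hψ hχ hne,
    fun h0 => Copyable.ne_zero h0 rfl, hfrob.span_copyable_eq_top⟩
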